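/- arXiv:2601.14872 — 2 statements merged into one kernel-verified Lean document; each statement's English description precedes it below -/
import Mathlib

section
/- Fix a subset S ⊆ P_{n,k} with |S| = m and let U* be a standard Gaussian vector on ℝⁿ. Then for any ξ ∈ (0,1), with probability at least 1 − ξ, max_{Π ∈ S} ‖U* − Πᵀ U*‖₂ ≤ 2 √( k + 2√(k log(m/ξ)) + 2 log(m/ξ) ). -/
open MeasureTheory ProbabilityTheory Real Matrix Finset

noncomputable section

namespace PermReg

/-- `v` is a permutation matrix. -/
def IsPermMatrix {n : ℕ} (M : Matrix (Fin n) (Fin n) ℝ) : Prop :=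
  ∃ σ : Equiv.Perm (Fin n), M = σ.permMatrix ℝ

/-- Hamming distance `d(Π, I_n)`: number of zero diagonal entries. -/
def hamId {n : ℕ} (M : Matrix (Fin n) (Fin n) ℝ) : ℕ :=
  (Finset.univ.filter fun i => M i i = 0).card

/-- The set `P_{n,k}` of `k`-sparse permutation matrices. -/
def PermSparse (n k : ℕ) : Set (Matrix (Fin n) (Fin n) ℝ) :=
  {M | IsPermMatrix M ∧ hamId M ≤ k}

/-- Matrix of the orthogonal projection onto a submodule of `EuclideanSpace ℝ (Fin n)`. -/
noncomputable def projMat {n : ℕ} (V : Submodule ℝ (EuclideanSpace ℝ (Fin n))) :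
    Matrix (Fin n) (Fin n) ℝ :=
  Matrix.of fun i j =>
    (V.orthogonalProjectionOnto (EuclideanSpace.single j 1) : EuclideanSpace ℝ (Fin n)) i

/-- Column space of a matrix, as a submodule of `EuclideanSpace ℝ (Fin n)`. -/
def colSpace {n p : ℕ} (A : Matrix (Fin n) (Fin p) ℝ) :
    Submodule ℝ (EuclideanSpace ℝ (Fin n)) :=
  Submodule.span ℝ (Set.range fun j : Fin p => (WithLp.toLp 2 (fun i => A i j) : EuclideanSpace ℝ (Fin n)))

/-- `M_A`: orthogonal projection matrix onto the column space of `A`. -/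
noncomputable def projCol {n p : ℕ} (A : Matrix (Fin n) (Fin p) ℝ) :
    Matrix (Fin n) (Fin n) ℝ :=
  projMat (colSpace A)

/-- `M_{(A,u)}`: orthogonal projection matrix onto the column span of the matrix `[A, u]`. -/
noncomputable def projAug {n p : ℕ} (A : Matrix (Fin n) (Fin p) ℝ) (u : Fin n → ℝ) :
    Matrix (Fin n) (Fin n) ℝ :=
  projMat (colSpace A ⊔ Submodule.span ℝ {(WithLp.toLp 2 u : EuclideanSpace ℝ (Fin n))})

/-- `M_v`: orthogonal projection onto the span of a single vector (zero matrix if `v = 0`). -/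
noncomputable def projVec {n : ℕ} (v : Fin n → ℝ) : Matrix (Fin n) (Fin n) ℝ :=
  projMat (Submodule.span ℝ {(WithLp.toLp 2 v : EuclideanSpace ℝ (Fin n))})

/-- Squared Euclidean norm `‖v‖₂²`. -/
def sqNorm {ι : Type*} [Fintype ι] (v : ι → ℝ) : ℝ := ∑ i, (v i) ^ 2

/-- Euclidean norm `‖v‖₂`. -/
noncomputable def norm2 {ι : Type*} [Fintype ι] (v : ι → ℝ) : ℝ := Real.sqrt (sqNorm v)

/-- Operator (spectral) norm of a matrix. -/
noncomputable def opNorm {n p : ℕ} (A : Matrix (Fin n) (Fin p) ℝ) : ℝ :=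
  ‖(Matrix.toEuclideanLin A).toContinuousLinearMap‖

/-- Squared cosine similarity `φ(v₁,v₂)`, equal to `0` if either vector is zero. -/
noncomputable def phi {n : ℕ} (v w : Fin n → ℝ) : ℝ :=
  (∑ i, v i * w i) ^ 2 / (sqNorm v * sqNorm w)

/-- Standard Gaussian measure `N(0, I_n)` on `ℝⁿ`. -/
noncomputable def stdGaussian (n : ℕ) : Measure (Fin n → ℝ) :=
  Measure.pi fun _ => gaussianReal 0 1

/-- `M_X := X (Xᵀ X)⁻¹ Xᵀ`. -/
noncomputable def hatMat {n p : ℕ} (X : Matrix (Fin n) (Fin p) ℝ) :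
    Matrix (Fin n) (Fin n) ℝ :=
  X * (Xᵀ * X)⁻¹ * Xᵀ

/-- Separation constant `C_min(Pi0)`. -/
noncomputable def Cmin {n p : ℕ} (k : ℕ) (X : Matrix (Fin n) (Fin p) ℝ)
    (Pi0 : Matrix (Fin n) (Fin n) ℝ) (β₀ : Fin p → ℝ) : ℝ :=
  sInf {r : ℝ | ∃ Pm ∈ PermSparse n k, Pm ≠ Pi0 ∧
    r = sqNorm ((1 - Pm * hatMat X * Pmᵀ).mulVec (Pi0.mulVec (X.mulVec β₀))) /
        (n * max ((hamId Pi0 : ℝ) - (hamId Pm : ℝ)) 1)}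

/-- `Ψ(x) = x − 1 − log x`. -/
noncomputable def Psi (x : ℝ) : ℝ := x - 1 - Real.log x

/-- Real-valued derangement number `D_j = j! ∑_{i=0}^{j} (−1)^i / i!`. -/
noncomputable def derangeR (j : ℕ) : ℝ :=
  (Nat.factorial j : ℝ) * ∑ i ∈ Finset.range (j + 1), (-1 : ℝ) ^ i / (Nat.factorial i : ℝ)

/-- The bound `Δ(γ)`. -/
noncomputable def DeltaBound (n p k : ℕ) (Cm σ₀ γ : ℝ) : ℝ :=
  (∑ m ∈ Finset.Icc (n - k) n, (n.choose m : ℝ) * derangeR (n - m) *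
    (Real.exp (-(n / 2 : ℝ) *
        Psi (max 1 (Cm * Real.log (Real.exp 1 / γ) / (2 * σ₀ ^ 2 * γ)))) +
     Real.exp (-(n / 2 : ℝ) *
        Psi (max 1 (Cm * (Real.log (Real.exp 1 / γ)) ^ 2 / (16 * σ₀ ^ 2))))))
  + (Real.pi / 2) ^ (n - p - 2) * (Nat.card (PermSparse n k) : ℝ) *
      (γ * Real.log (Real.exp 1 / γ)) ^ (((n : ℝ) - p - 1) / 2)



/-! ### Auxiliary lemmas for Statement 12 -/

section Aux12

lemma gpdf_mul_aux (l : ℝ) (x : ℝ) :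
    gaussianPDFReal 0 1 x * Real.exp (l * x ^ 2)
      = (Real.sqrt (2 * π))⁻¹ * Real.exp (-(1/2 - l) * x ^ 2) := by
  unfold gaussianPDFReal
  rw [mul_assoc, ← Real.exp_add]
  push_cast
  ring_nf

lemma integrable_exp_mul_sq_gaussian {l : ℝ} (hl : l < 1/2) :
    Integrable (fun x => Real.exp (l * x ^ 2)) (gaussianReal 0 1) := by
  rw [gaussianReal_of_var_ne_zero 0 one_ne_zero,
    integrable_withDensity_iff (measurable_gaussianPDF 0 1)
      (Filter.Eventually.of_forall fun x => ENNReal.ofReal_lt_top)]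
  have : (fun x => Real.exp (l * x ^ 2) * ((gaussianPDF 0 1 x).toReal))
      = fun x => (Real.sqrt (2 * π))⁻¹ * Real.exp (-(1/2 - l) * x ^ 2) := by
    funext x
    rw [gaussianPDF_def, ENNReal.toReal_ofReal (gaussianPDFReal_nonneg 0 1 x), mul_comm,
      gpdf_mul_aux]
  rw [this]
  exact (integrable_exp_neg_mul_sq (by linarith)).const_mul _

lemma integral_exp_mul_sq_gaussian {l : ℝ} (hl : l < 1/2) :
    ∫ x, Real.exp (l * x ^ 2) ∂(gaussianReal 0 1) = (Real.sqrt (1 - 2 * l))⁻¹ := by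
  rw [gaussianReal_of_var_ne_zero 0 one_ne_zero, gaussianPDF_def]
  simp_rw [ENNReal.ofReal]
  rw [integral_withDensity_eq_integral_smul
    ((measurable_gaussianPDFReal 0 1).real_toNNReal) _]
  have : (fun x => (gaussianPDFReal 0 1 x).toNNReal • Real.exp (l * x ^ 2))
      = fun x => (Real.sqrt (2 * π))⁻¹ * Real.exp (-(1/2 - l) * x ^ 2) := by
    funext x
    rw [NNReal.smul_def, Real.coe_toNNReal _ (gaussianPDFReal_nonneg 0 1 x), smul_eq_mul,
      gpdf_mul_aux]
  rw [this, integral_const_mul, integral_gaussian]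
  have h2 : (0:ℝ) < 1/2 - l := by linarith
  rw [← Real.sqrt_inv, ← Real.sqrt_mul (by positivity), ← Real.sqrt_inv]
  congr 1
  have hπ : (0:ℝ) < π := Real.pi_pos
  have h3 : (1:ℝ) - 2*l ≠ 0 := by linarith
  field_simp

lemma pi_inter_eq {ι : Type*} [Fintype ι] (μ : ι → Measure ℝ) [∀ i, IsProbabilityMeasure (μ i)]
    (S : Finset ι) (sets : ι → Set ℝ) (h : ∀ i ∈ S, MeasurableSet (sets i)) :
    Measure.pi μ (⋂ i ∈ S, (fun u : ι → ℝ => u i) ⁻¹' sets i) = ∏ i ∈ S, μ i (sets i) := by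
  classical
  clear h
  have hset : (⋂ i ∈ S, (fun u : ι → ℝ => u i) ⁻¹' sets i)
      = Set.pi Set.univ (fun i => if i ∈ S then sets i else Set.univ) := by
    ext u
    simp only [Set.mem_iInter, Set.mem_preimage, Set.mem_pi, Set.mem_univ, true_implies]
    refine ⟨fun hu i => ?_, fun hu i hi => ?_⟩
    · by_cases hi : i ∈ S <;> simp [hi, hu i]
    · simpa [hi] using hu i
  rw [hset, Measure.pi_pi]
  calc ∏ i, μ i (if i ∈ S then sets i else Set.univ)
      = ∏ i, (if i ∈ S then μ i (sets i) else 1) := by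
        refine Finset.prod_congr rfl fun i _ => ?_
        by_cases hi : i ∈ S <;> simp [hi]
    _ = ∏ i ∈ S, μ i (sets i) := by rw [Finset.prod_ite_mem, Finset.univ_inter]

lemma iIndepFun_eval {ι : Type*} [Fintype ι] (μ : ι → Measure ℝ)
    [∀ i, IsProbabilityMeasure (μ i)] :
    iIndepFun (fun i (u : ι → ℝ) => u i) (Measure.pi μ) := by
  rw [ProbabilityTheory.iIndepFun_iff_measure_inter_preimage_eq_mul]
  intro S sets hsets
  rw [pi_inter_eq μ S sets hsets]
  refine Finset.prod_congr rfl fun i hi => ?_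
  have := pi_inter_eq μ {i} sets (by simpa using hsets i hi)
  simpa using this.symm

lemma map_eval_pi {ι : Type*} [Fintype ι] (μ : ι → Measure ℝ)
    [∀ i, IsProbabilityMeasure (μ i)] (i : ι) :
    (Measure.pi μ).map (fun u : ι → ℝ => u i) = μ i := by
  refine Measure.ext fun s hs => ?_
  rw [Measure.map_apply (measurable_pi_apply i) hs]
  have := pi_inter_eq μ {i} (fun _ => s) (by simpa using hs)
  simpa using this

lemma chernoff_sum_sq {n : ℕ} (F : Finset (Fin n)) {l : ℝ} (hl0 : 0 ≤ l) (hl : l < 1/2)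
    (B : ℝ) :
    (Measure.pi fun _ : Fin n => gaussianReal 0 1) {u | B ≤ ∑ i ∈ F, (u i)^2}
      ≤ ENNReal.ofReal (Real.exp (-l * B) * ((Real.sqrt (1 - 2*l))⁻¹) ^ F.card) := by
  set μp := (Measure.pi fun _ : Fin n => gaussianReal 0 1) with hμp
  set Y : Fin n → (Fin n → ℝ) → ℝ := fun i u => (u i)^2 with hY
  have hYmeas : ∀ i, Measurable (Y i) := fun i => (measurable_pi_apply i).pow_const 2
  have hindep : iIndepFun Y μp :=
    (iIndepFun_eval _).comp (fun _ x => x ^ 2) (fun _ => measurable_id.pow_const 2)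
  have hInt : ∀ i, Integrable (fun ω => Real.exp (l * Y i ω)) μp := by
    intro i
    have h1 : Integrable (fun x => Real.exp (l * x ^ 2)) (μp.map (fun u => u i)) := by
      rw [map_eval_pi]; exact integrable_exp_mul_sq_gaussian hl
    exact (integrable_map_measure h1.aestronglyMeasurable
      (measurable_pi_apply i).aemeasurable).mp h1
  have hmgf : ∀ i, mgf (Y i) μp l = (Real.sqrt (1 - 2*l))⁻¹ := by
    intro i
    have h1 : mgf (Y i) μp l = ∫ x, Real.exp (l * x ^ 2) ∂(μp.map (fun u => u i)) := by
      rw [integral_map (measurable_pi_apply i).aemeasurable]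
      · rfl
      · exact (Measurable.aestronglyMeasurable (by fun_prop))
    rw [h1, map_eval_pi]
    exact integral_exp_mul_sq_gaussian hl
  set X := ∑ i ∈ F, Y i with hX
  have hIntX : Integrable (fun ω => Real.exp (l * X ω)) μp :=
    hindep.integrable_exp_mul_sum hYmeas (fun i _ => hInt i)
  have hset : {u : Fin n → ℝ | B ≤ ∑ i ∈ F, (u i)^2} = {ω | B ≤ X ω} := by
    ext u; simp [hX, Finset.sum_apply, hY]
  have hb := measure_ge_le_exp_mul_mgf (X := X) (μ := μp) B hl0 hIntX
  rw [hindep.mgf_sum hYmeas] at hb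
  simp_rw [hmgf] at hb
  rw [Finset.prod_const] at hb
  rw [hset, ← ENNReal.ofReal_toReal (measure_ne_top μp _)]
  exact ENNReal.ofReal_le_ofReal hb

lemma log_le_half_sub (x : ℝ) (hx : 1 ≤ x) : Real.log x ≤ (x - x⁻¹) / 2 := by
  rcases eq_or_lt_of_le hx with h | h
  · simp [← h]
  · have hw : 0 < Real.log x := Real.log_pos h
    have := (Real.self_lt_sinh_iff.mpr hw).le
    rwa [Real.sinh_eq, Real.exp_log (by linarith), Real.exp_neg,
      Real.exp_log (by linarith)] at this

lemma log_key (u : ℝ) (hu : 0 ≤ u) : Real.log (1 + 2*u) ≤ 2*u*(1+u) / (1+2*u) := by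
  have hx : (1:ℝ) ≤ 1 + 2*u := by linarith
  have hx0 : (0:ℝ) < 1 + 2*u := by linarith
  refine (log_le_half_sub _ hx).trans (le_of_eq ?_)
  field_simp
  ring

lemma chernoff_opt {k : ℕ} (hk : 1 ≤ k) {t : ℝ} (ht : 0 ≤ t) :
    ∃ l : ℝ, 0 ≤ l ∧ l < 1/2 ∧
      Real.exp (-l * ((k:ℝ) + 2*Real.sqrt (k*t) + 2*t)) * ((Real.sqrt (1 - 2*l))⁻¹)^k
        ≤ Real.exp (-t) := by
  have hk0 : (0:ℝ) < k := by exact_mod_cast hk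
  set u := Real.sqrt (t / k) with hu
  have hu0 : 0 ≤ u := Real.sqrt_nonneg _
  have hx0 : (0:ℝ) < 1 + 2*u := by linarith
  set l := u / (1 + 2*u) with hl
  have hl0 : 0 ≤ l := by positivity
  have hl2 : l < 1/2 := by
    rw [hl, div_lt_div_iff₀ hx0 (by norm_num)]
    linarith
  have husq : u^2 = t / k := Real.sq_sqrt (by positivity)
  have htku : t = k * u^2 := by rw [husq]; field_simp
  have hskt : Real.sqrt ((k:ℝ)*t) = k * u := by
    rw [htku, show (k:ℝ) * (k * u^2) = (k*u)^2 by ring, Real.sqrt_sq (by positivity)]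
  have h12l : 1 - 2*l = (1 + 2*u)⁻¹ := by
    rw [hl]; field_simp; ring
  refine ⟨l, hl0, hl2, ?_⟩
  have hsqrt : (Real.sqrt (1 - 2*l))⁻¹ = Real.exp (Real.log (1 + 2*u) / 2) := by
    rw [h12l, Real.sqrt_inv, inv_inv, ← Real.log_sqrt hx0.le,
      Real.exp_log (Real.sqrt_pos.mpr hx0)]
  rw [hsqrt, ← Real.exp_nat_mul, ← Real.exp_add, Real.exp_le_exp]
  have hkey := log_key u hu0
  have hlB : -l * ((k:ℝ) + 2*Real.sqrt (k*t) + 2*t) + k * (Real.log (1+2*u) / 2)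
      = (k:ℝ)/2 * Real.log (1+2*u) - l * ((k:ℝ) + 2*(k*u) + 2*(k*u^2)) := by
    rw [hskt, ← htku]; ring
  rw [hlB]
  have h2 : (k:ℝ)/2 * Real.log (1+2*u) ≤ (k:ℝ)/2 * (2*u*(1+u)/(1+2*u)) := by
    apply mul_le_mul_of_nonneg_left hkey (by positivity)
  have h3 : (k:ℝ)/2 * (2*u*(1+u)/(1+2*u)) - l * ((k:ℝ) + 2*(k*u) + 2*(k*u^2)) = -t := by
    rw [hl, htku]
    field_simp
    ring
  linarith

lemma permMatrix_entry {n : ℕ} (σ : Equiv.Perm (Fin n)) (i j : Fin n) :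
    σ.permMatrix ℝ i j = if σ i = j then 1 else 0 := by
  simp [Equiv.Perm.permMatrix, PEquiv.toMatrix_apply, Equiv.toPEquiv_apply, Option.mem_def,
    eq_comm]

lemma permMatrix_transpose_mulVec {n : ℕ} (σ : Equiv.Perm (Fin n)) (u : Fin n → ℝ) (i : Fin n) :
    ((σ.permMatrix ℝ)ᵀ.mulVec u) i = u (σ.symm i) := by
  simp only [Matrix.mulVec, Matrix.transpose_apply, dotProduct, permMatrix_entry]
  calc ∑ j, (if σ j = i then (1:ℝ) else 0) * u j
      = ∑ j, (if j = σ.symm i then u j else 0) := by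
        refine Finset.sum_congr rfl fun j _ => ?_
        by_cases hj : σ j = i
        · have h2 : j = σ.symm i := by rw [← hj]; simp
          simp [hj, h2]
        · have : j ≠ σ.symm i := fun hc => hj (by rw [hc]; simp)
          simp [hj, this]
    _ = u (σ.symm i) := by rw [Finset.sum_ite_eq' Finset.univ (σ.symm i) u]; simp

lemma perm_pointwise_bound {n k : ℕ} {Pm : Matrix (Fin n) (Fin n) ℝ}
    (hPm : Pm ∈ PermSparse n k) (u : Fin n → ℝ) :
    norm2 (u - Pmᵀ.mulVec u)
      ≤ 2 * Real.sqrt (∑ i ∈ Finset.univ.filter (fun i => Pm i i = 0), (u i)^2) := by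
  classical
  obtain ⟨⟨σ, rfl⟩, -⟩ := hPm
  set F := Finset.univ.filter (fun i => σ.permMatrix ℝ i i = 0) with hF
  have hmemF : ∀ i, i ∈ F ↔ σ i ≠ i := by
    intro i
    simp only [hF, Finset.mem_filter, Finset.mem_univ, true_and, permMatrix_entry]
    by_cases h : σ i = i <;> simp [h]
  have hFsymm : ∀ i, i ∈ F → σ.symm i ∈ F := by
    intro i hi
    rw [hmemF] at hi ⊢
    intro hc
    have h2 : i = σ.symm i := by simpa using hc
    rw [← h2] at hc
    exact hi hc
  have hzero : ∀ i, i ∉ F → (u - (σ.permMatrix ℝ)ᵀ.mulVec u) i = 0 := by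
    intro i hi
    rw [hmemF] at hi
    push_neg at hi
    have hsym : σ.symm i = i := (Equiv.symm_apply_eq σ).mpr hi.symm
    simp only [Pi.sub_apply, permMatrix_transpose_mulVec, hsym, sub_self]
  have hsq : sqNorm (u - (σ.permMatrix ℝ)ᵀ.mulVec u) ≤ 4 * ∑ i ∈ F, (u i)^2 := by
    unfold sqNorm
    rw [← Finset.sum_filter_add_sum_filter_not Finset.univ (fun i => i ∈ F)]
    have h1 : ∀ i ∈ Finset.univ.filter (fun i => i ∉ F),
        ((u - (σ.permMatrix ℝ)ᵀ.mulVec u) i)^2 = 0 := by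
      intro i hi
      rw [hzero i (Finset.mem_filter.mp hi).2]
      ring
    rw [Finset.sum_congr rfl h1, Finset.sum_const_zero, add_zero]
    have h2 : Finset.univ.filter (fun i => i ∈ F) = F := by
      ext i; simp
    rw [h2]
    have h3 : ∀ i ∈ F, ((u - (σ.permMatrix ℝ)ᵀ.mulVec u) i)^2
        ≤ 2 * (u i)^2 + 2 * (u (σ.symm i))^2 := by
      intro i _
      have : (u - (σ.permMatrix ℝ)ᵀ.mulVec u) i = u i - u (σ.symm i) := by
        simp only [Pi.sub_apply, permMatrix_transpose_mulVec]
      rw [this]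
      nlinarith [sq_nonneg (u i + u (σ.symm i))]
    calc ∑ i ∈ F, ((u - (σ.permMatrix ℝ)ᵀ.mulVec u) i)^2
        ≤ ∑ i ∈ F, (2 * (u i)^2 + 2 * (u (σ.symm i))^2) := Finset.sum_le_sum h3
      _ = 2 * ∑ i ∈ F, (u i)^2 + 2 * ∑ i ∈ F, (u (σ.symm i))^2 := by
          rw [Finset.sum_add_distrib, Finset.mul_sum, Finset.mul_sum]
      _ = 4 * ∑ i ∈ F, (u i)^2 := by
          have hre : ∑ i ∈ F, (u (σ.symm i))^2 = ∑ i ∈ F, (u i)^2 := by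
            refine Finset.sum_nbij' (fun i => σ.symm i) (fun i => σ i) ?_ ?_ ?_ ?_ ?_
            · intro a ha; exact hFsymm a ha
            · intro a ha
              rw [hmemF] at ha ⊢
              intro hc; exact ha (by simpa using congrArg σ.symm hc)
            · intro a _; simp
            · intro a _; simp
            · intro a _; rfl
          rw [hre]; ring
  unfold norm2
  calc Real.sqrt (sqNorm (u - (σ.permMatrix ℝ)ᵀ.mulVec u))
      ≤ Real.sqrt (4 * ∑ i ∈ F, (u i)^2) := Real.sqrt_le_sqrt hsq
    _ = 2 * Real.sqrt (∑ i ∈ F, (u i)^2) := by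
        rw [Real.sqrt_mul (by norm_num), show Real.sqrt 4 = 2 by
          rw [show (4:ℝ) = 2^2 by norm_num, Real.sqrt_sq (by norm_num)]]

end Aux12

/-- uniform bound on `‖U* − Πᵀ U*‖₂` over a finite set of sparse permutations. -/
theorem statement12 {n k m : ℕ} (S : Finset (Matrix (Fin n) (Fin n) ℝ))
    (hS : ↑S ⊆ PermSparse n k) (hcard : S.card = m)
    (ξ : ℝ) (hξ : ξ ∈ Set.Ioo (0 : ℝ) 1) :
    ENNReal.ofReal (1 - ξ) ≤
      stdGaussian n
        {u | ∀ Pm ∈ S, norm2 (u - Pmᵀ.mulVec u) ≤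
          2 * Real.sqrt ((k : ℝ) + 2 * Real.sqrt (k * Real.log (m / ξ)) +
            2 * Real.log (m / ξ))} := by
  classical
  have hprob : IsProbabilityMeasure (stdGaussian n) := by
    unfold stdGaussian; infer_instance
  obtain ⟨hξ0, hξ1⟩ := hξ
  set t := Real.log (↑m / ξ) with htdef
  set B := (k:ℝ) + 2 * Real.sqrt (↑k * t) + 2 * t with hBdef
  rcases S.eq_empty_or_nonempty with hemp | hne
  · subst hemp
    have : {u : Fin n → ℝ | ∀ Pm ∈ (∅ : Finset (Matrix (Fin n) (Fin n) ℝ)),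
        norm2 (u - Pmᵀ.mulVec u) ≤ 2 * Real.sqrt B} = Set.univ := by
      ext u; simp
    rw [this, measure_univ]
    exact ENNReal.ofReal_le_one.mpr (by linarith)
  have hm1 : 1 ≤ m := by
    rw [← hcard]; exact Finset.card_pos.mpr hne
  have hm0 : (0:ℝ) < m := by exact_mod_cast hm1
  have ht0 : 0 ≤ t := by
    refine Real.log_nonneg ?_
    rw [le_div_iff₀ hξ0]
    have : (1:ℝ) ≤ m := by exact_mod_cast hm1
    linarith
  set Fs : Matrix (Fin n) (Fin n) ℝ → Finset (Fin n) :=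
    fun Pm => Finset.univ.filter (fun i => Pm i i = 0) with hFs
  have hFcard : ∀ Pm ∈ S, (Fs Pm).card ≤ k := fun Pm hPm => (hS hPm).2
  set G : Set (Fin n → ℝ) := ⋂ Pm ∈ S, {u | ∑ i ∈ Fs Pm, (u i)^2 ≤ B} with hG
  have hGsub : G ⊆ {u | ∀ Pm ∈ S, norm2 (u - Pmᵀ.mulVec u) ≤ 2 * Real.sqrt B} := by
    intro u hu Pm hPm
    have h2 : ∑ i ∈ Fs Pm, (u i)^2 ≤ B := by
      have := Set.mem_iInter₂.mp hu Pm hPm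
      exact this
    refine (perm_pointwise_bound (hS hPm) u).trans ?_
    exact mul_le_mul_of_nonneg_left (Real.sqrt_le_sqrt h2) (by norm_num)
  refine le_trans ?_ (measure_mono hGsub)
  have hGm : MeasurableSet G := by
    refine MeasurableSet.biInter S.countable_toSet fun Pm _ => ?_
    exact measurableSet_le (Finset.measurable_sum _ fun i _ =>
      (measurable_pi_apply i).pow_const 2) measurable_const
  have hstd : stdGaussian n = Measure.pi fun _ : Fin n => gaussianReal 0 1 := rfl
  have hGc : stdGaussian n Gᶜ ≤ ENNReal.ofReal ξ := by
    have hGceq : Gᶜ = ⋃ Pm ∈ S, {u : Fin n → ℝ | B < ∑ i ∈ Fs Pm, (u i)^2} := by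
      rw [hG]
      simp only [Set.compl_iInter, Set.compl_setOf, not_le]
    rw [hGceq]
    refine (measure_biUnion_finset_le S _).trans ?_
    have hper : ∀ Pm ∈ S, stdGaussian n {u : Fin n → ℝ | B < ∑ i ∈ Fs Pm, (u i)^2}
        ≤ ENNReal.ofReal (ξ / m) := by
      intro Pm hPm
      by_cases hk0 : k = 0
      · have hFe : Fs Pm = ∅ := by
          have := hFcard Pm hPm
          rw [hk0, Nat.le_zero, Finset.card_eq_zero] at this
          exact this
        have hB0 : 0 ≤ B := by
          rw [hBdef]
          have := Real.sqrt_nonneg ((k:ℝ) * t)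
          positivity
        have hempty : {u : Fin n → ℝ | B < ∑ i ∈ Fs Pm, (u i)^2} = ∅ := by
          ext u
          simp only [Set.mem_setOf_eq, Set.mem_empty_iff_false, iff_false, not_lt, hFe,
            Finset.sum_empty]
          exact hB0
        rw [hempty]
        simp
      · have hk1 : 1 ≤ k := Nat.one_le_iff_ne_zero.mpr hk0
        obtain ⟨l, hl0, hl2, hopt⟩ := chernoff_opt hk1 ht0
        have hmono : {u : Fin n → ℝ | B < ∑ i ∈ Fs Pm, (u i)^2}
            ⊆ {u : Fin n → ℝ | B ≤ ∑ i ∈ Fs Pm, (u i)^2} :=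
          Set.setOf_subset_setOf.mpr fun u hu => hu.le
        refine (measure_mono hmono).trans ?_
        rw [hstd]
        refine (chernoff_sum_sq (Fs Pm) hl0 hl2 B).trans ?_
        refine ENNReal.ofReal_le_ofReal ?_
        have hc1 : 1 ≤ (Real.sqrt (1 - 2*l))⁻¹ := by
          rw [one_le_inv_iff₀]
          constructor
          · exact Real.sqrt_pos.mpr (by linarith)
          · exact sqrt_le_one.mpr (by linarith)
        have hpow : ((Real.sqrt (1 - 2*l))⁻¹) ^ (Fs Pm).card
            ≤ ((Real.sqrt (1 - 2*l))⁻¹) ^ k :=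
          pow_le_pow_right₀ hc1 (hFcard Pm hPm)
        have hstep : Real.exp (-l * B) * ((Real.sqrt (1 - 2*l))⁻¹) ^ (Fs Pm).card
            ≤ Real.exp (-l * B) * ((Real.sqrt (1 - 2*l))⁻¹) ^ k :=
          mul_le_mul_of_nonneg_left hpow (Real.exp_pos _).le
        refine hstep.trans (hopt.trans ?_)
        have hexp : Real.exp (-t) = ξ / m := by
          rw [htdef, Real.exp_neg, Real.exp_log (by positivity), inv_div]
        exact le_of_eq hexp
    calc ∑ Pm ∈ S, stdGaussian n {u : Fin n → ℝ | B < ∑ i ∈ Fs Pm, (u i)^2}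
        ≤ ∑ Pm ∈ S, ENNReal.ofReal (ξ / m) := Finset.sum_le_sum hper
      _ = (m : ENNReal) * ENNReal.ofReal (ξ / m) := by
          rw [Finset.sum_const, hcard, nsmul_eq_mul]
      _ = ENNReal.ofReal ξ := by
          rw [← ENNReal.ofReal_natCast m, ← ENNReal.ofReal_mul (by positivity)]
          congr 1
          field_simp
  have h1 : stdGaussian n G = 1 - stdGaussian n Gᶜ := by
    rw [measure_compl hGm (measure_ne_top _ _), measure_univ,
      ENNReal.sub_sub_cancel ENNReal.one_ne_top prob_le_one]
  calc ENNReal.ofReal (1 - ξ) = 1 - ENNReal.ofReal ξ := by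
        rw [ENNReal.ofReal_sub _ hξ0.le, ENNReal.ofReal_one]
    _ ≤ 1 - stdGaussian n Gᶜ := tsub_le_tsub_left hGc 1
    _ = stdGaussian n G := h1.symm


end PermReg
end
end

section
/- Let Y, m ∈ ℝⁿ, λ₁ > 0 and λ₂ ≥ 0. For a permutation π of {1,…,n} with permutation matrix Π, define G(Π) := Σ_{i=1}^{n} (Y_i − m_{π(i)})² + Σ_{i=1}^{n} [ λ₁·1{π(i) ≠ i} − λ₂·1{π(i) = i}·(Y_i − m_i)² ]. Then any minimizer Π̃ of G over all n×n permutation matrices satisfies d(Π̃, I_n) ≤ ‖Y − m‖₂² / λ₁. In particular, for any integer k ≥ 1, if λ₁ ≥ ‖Y − m‖₂²/k then Π̃ ∈ P_{n,k}. -/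
open MeasureTheory ProbabilityTheory Real Matrix Finset

noncomputable section

namespace PermReg

/-- sparsity of minimizers of the score-weighted LAP objective. -/
theorem statement17 {n : ℕ} (Y m : Fin n → ℝ) (lam₁ lam₂ : ℝ)
    (hlam₁ : 0 < lam₁) (hlam₂ : 0 ≤ lam₂)
    (pt : Equiv.Perm (Fin n))
    (hmin : ∀ pp : Equiv.Perm (Fin n),
      ((∑ i, (Y i - m (pt i)) ^ 2) +
        ∑ i, ((if pt i ≠ i then lam₁ else 0) -
          (if pt i = i then lam₂ * (Y i - m i) ^ 2 else 0))) ≤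
      ((∑ i, (Y i - m (pp i)) ^ 2) +
        ∑ i, ((if pp i ≠ i then lam₁ else 0) -
          (if pp i = i then lam₂ * (Y i - m i) ^ 2 else 0)))) :
    (hamId (pt.permMatrix ℝ) : ℝ) ≤ sqNorm (Y - m) / lam₁ ∧
      ∀ k : ℕ, 1 ≤ k → sqNorm (Y - m) / k ≤ lam₁ →
        pt.permMatrix ℝ ∈ PermSparse n k := by
  classical
  have hcard : hamId (pt.permMatrix ℝ) = (Finset.univ.filter fun i => pt i ≠ i).card := by
    unfold hamId
    congr 1
    ext i
    simp [Equiv.Perm.permMatrix, PEquiv.toMatrix, Equiv.toPEquiv, Option.mem_def]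
  have hS : sqNorm (Y - m) = ∑ i, (Y i - m i) ^ 2 := by
    simp [sqNorm]
  have key : (((Finset.univ.filter fun i => pt i ≠ i).card : ℝ)) * lam₁ ≤ sqNorm (Y - m) := by
    have h := hmin 1
    simp only [Equiv.Perm.one_apply, ne_eq, not_true_eq_false, if_false, if_true,
      ite_true, Finset.sum_sub_distrib, Finset.sum_const_zero] at h
    have hsum1 : (∑ i, (if pt i ≠ i then lam₁ else 0))
        = ((Finset.univ.filter fun i => pt i ≠ i).card : ℝ) * lam₁ := by
      rw [Finset.sum_ite, Finset.sum_const, Finset.sum_const_zero, nsmul_eq_mul, add_zero]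
    have hsum2 : (∑ i, (if pt i = i then lam₂ * (Y i - m i) ^ 2 else 0))
        ≤ ∑ i, lam₂ * (Y i - m i) ^ 2 := by
      apply Finset.sum_le_sum
      intro i _
      by_cases hpi : pt i = i
      · simp [hpi]
      · simp [hpi]
        positivity
    have hnn : (0:ℝ) ≤ ∑ i, (Y i - m (pt i)) ^ 2 := by positivity
    rw [hS]
    simp only [ne_eq, Finset.sum_sub_distrib] at h ⊢
    rw [hsum1] at h
    nlinarith [hsum2, hnn]
  constructor
  · rw [hcard, le_div_iff₀ hlam₁]
    exact key
  · intro k hk hkl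
    refine ⟨⟨pt, rfl⟩, ?_⟩
    have hk0 : (0:ℝ) < k := by exact_mod_cast hk
    have hSk : sqNorm (Y - m) ≤ k * lam₁ := by
      rw [div_le_iff₀ hk0] at hkl
      linarith [hkl]
    have : (hamId (pt.permMatrix ℝ) : ℝ) ≤ k := by
      rw [hcard]
      have := key
      nlinarith
    exact_mod_cast this

end PermReg
end
end
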